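/- arXiv:1405.7680 — 2 statements merged into one kernel-verified Lean document; each statement's English description precedes it below -/
import Mathlib

section
/- Let F : C → D be a right exact additive symmetric monoidal functor between abelian tensor categories (where the tensor product of D is right exact in each variable), and let I ⊆ 1_C be a subobject of the unit (an ideal) such that F(1_C / I) ≅ 0. Then the induced map F(I) → F(1_C) is an isomorphism. -/
open CategoryTheory CategoryTheory.Limits CategoryTheory.MonoidalCategory
open CategoryTheory.Functor.LaxMonoidal

/-- Lemma 5.4 (Brandenburg–Chirvasitu): if `F : C ⥤ D` is a right exact additive
symmetric monoidal functor between abelian tensor categories (the tensor product of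
`D` being right exact in each variable) and `I ↪ 𝟙_C` is an ideal of the unit with
`F(𝟙_C / I) ≅ 0`, then `F(I) → F(𝟙_C)` is an isomorphism. -/
theorem ideal_iso_of_tensor_functor
    {C : Type*} {D : Type*} [Category C] [Category D]
    [Abelian C] [Abelian D]
    [MonoidalCategory C] [MonoidalCategory D]
    [SymmetricCategory C] [SymmetricCategory D]
    [∀ X : D, PreservesFiniteColimits (tensorLeft X)]
    [∀ X : D, PreservesFiniteColimits (tensorRight X)]
    (F : C ⥤ D) [F.Braided] [F.Additive] [PreservesFiniteColimits F]
    (I : C) (ι : I ⟶ 𝟙_ C) [Mono ι]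
    (h : IsZero (F.obj (cokernel ι))) :
    IsIso (F.map ι) := by
  set f := F.map ι with hf
  -- epi
  have hz : IsZero (cokernel f) := h.of_iso (PreservesCokernel.iso F ι).symm
  have hepi : Epi f := Abelian.epi_of_cokernel_π_eq_zero _ (hz.eq_of_tgt _ _)
  -- the two multiplications agree
  have hmul : (ι ▷ I) ≫ (λ_ I).hom = (I ◁ ι) ≫ (ρ_ I).hom := by
    rw [← cancel_mono ι]
    simp only [Category.assoc]
    calc ι ▷ I ≫ (λ_ I).hom ≫ ι
        = ι ▷ I ≫ 𝟙_ C ◁ ι ≫ (λ_ (𝟙_ C)).hom := by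
          rw [MonoidalCategory.leftUnitor_naturality]
      _ = I ◁ ι ≫ ι ▷ 𝟙_ C ≫ (ρ_ (𝟙_ C)).hom := by
          rw [← whisker_exchange_assoc, MonoidalCategory.unitors_equal]
      _ = I ◁ ι ≫ (ρ_ I).hom ≫ ι := by
          rw [MonoidalCategory.rightUnitor_naturality]
  set K := kernel f
  set k : K ⟶ F.obj I := kernel.ι f with hk
  have hA : (k ▷ F.obj I) ≫ μ F I I ≫ F.map ((ι ▷ I) ≫ (λ_ I).hom) = 0 := by
    rw [F.map_comp, ← Functor.LaxMonoidal.μ_natural_left_assoc]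
    rw [← comp_whiskerRight_assoc, kernel.condition]
    have : (0 : K ⟶ F.obj (𝟙_ C)) ▷ F.obj I = 0 := by
      simpa using (tensorRight (F.obj I)).map_zero K (F.obj (𝟙_ C))
    rw [this, zero_comp]
  rw [hmul] at hA
  have hB : (k ▷ F.obj I) ≫ μ F I I ≫ F.map ((I ◁ ι) ≫ (ρ_ I).hom)
      = (K ◁ (f ≫ inv (ε F))) ≫ (ρ_ K).hom ≫ k := by
    rw [F.map_comp, ← Functor.LaxMonoidal.μ_natural_right_assoc]
    have hru : μ F I (𝟙_ C) ≫ F.map (ρ_ I).hom = (F.obj I ◁ inv (ε F)) ≫ (ρ_ (F.obj I)).hom := by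
      rw [Functor.LaxMonoidal.right_unitality]
      simp [← MonoidalCategory.whiskerLeft_comp_assoc]
    rw [hru, ← MonoidalCategory.whiskerLeft_comp_assoc, ← whisker_exchange_assoc,
      MonoidalCategory.rightUnitor_naturality]
  rw [hB] at hA
  have hepi2 : Epi (K ◁ (f ≫ inv (ε F))) := by
    have : Epi (f ≫ inv (ε F)) := epi_comp _ _
    exact (tensorLeft K).map_epi _
  have h2 : (ρ_ K).hom ≫ k = 0 := by
    rw [← cancel_epi (K ◁ (f ≫ inv (ε F))), comp_zero]
    exact hA
  have hk0 : k = 0 := by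
    rw [← Category.id_comp k, ← (ρ_ K).inv_hom_id, Category.assoc, h2, comp_zero]
  have hmono : Mono f := Abelian.mono_of_kernel_ι_eq_zero _ hk0
  exact isIso_of_mono_of_epi f
end

section
/- Let A = k[x, z₁, z₂, …]/(x·z₁, {z_k − x·z_{k+1}}_{k≥1}, {z_i·z_j}_{i,j≥1}) over a field k and let B = A/(z₁). Then for every n ≥ 1 the induced map A/(xⁿ) → B/(xⁿ) is an isomorphism (both equal k[x]/(xⁿ)), the localizations A_x → B_x are isomorphic (both equal k[x]_x), yet the surjection A → B is not an isomorphism. -/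
open MvPolynomial

noncomputable section

/-- The polynomial ring `k[x, z₁, z₂, …]`, with `x` indexed by `none` and
`z_{n+1}` indexed by `some n`. -/
abbrev ExPolyRing (k : Type*) [Field k] := MvPolynomial (Option ℕ) k

/-- The variable `x`. -/
def exX (k : Type*) [Field k] : ExPolyRing k := X none

/-- The variable `z_{n+1}`. -/
def exZ (k : Type*) [Field k] (n : ℕ) : ExPolyRing k := X (some n)

/-- The ideal `(x z₁, {z_k − x z_{k+1}}_{k ≥ 1}, {z_i z_j}_{i,j ≥ 1})`. -/
def exRel (k : Type*) [Field k] : Ideal (ExPolyRing k) :=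
  Ideal.span ({exX k * exZ k 0} ∪
    (Set.range fun n : ℕ => exZ k n - exX k * exZ k (n + 1)) ∪
    (Set.range fun p : ℕ × ℕ => exZ k p.1 * exZ k p.2))

/-- The ring `A = k[x, z₁, z₂, …]/(x z₁, {z_k − x z_{k+1}}, {z_i z_j})`. -/
abbrev ExA (k : Type*) [Field k] := ExPolyRing k ⧸ exRel k

/-- The image of `x` in `A`. -/
def exXA (k : Type*) [Field k] : ExA k := Ideal.Quotient.mk _ (exX k)

/-- The image of `z₁` in `A`. -/
def exZA (k : Type*) [Field k] : ExA k := Ideal.Quotient.mk _ (exZ k 0)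

/-- The surjection `A → B = A/(z₁)`. -/
def exToB (k : Type*) [Field k] : ExA k →+* ExA k ⧸ Ideal.span {exZA k} :=
  Ideal.Quotient.mk _

lemma span_pow_le_comap {R S : Type*} [CommRing R] [CommRing S]
    (f : R →+* S) (a : R) (n : ℕ) :
    Ideal.span {a ^ n} ≤ (Ideal.span {f a ^ n}).comap f := by
  rw [Ideal.span_le, Set.singleton_subset_iff]
  simp only [SetLike.mem_coe, Ideal.mem_comap, map_pow]
  exact Ideal.subset_span rfl

/-!
The kernel of `A → B` is `(z₁)`, and `z₁ = xⁿ z_{n+1}` lies in every `(xⁿ)` and is killed by `x`;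
so the kernel disappears both modulo `xⁿ` and after inverting `x`. It remains to see `z₁ ≠ 0` in
`A`: send `x ↦ X` and `z_{n+1} ↦ eₙ` into the square-zero extension `k[X] ⊕ k^ℕ`, where `X` acts
on `k^ℕ` as the shift `eₙ₊₁ ↦ eₙ`, `e₀ ↦ 0` (this module is `k[X, X⁻¹]/k[X]` with `eₙ = X^{-n-1}`).
-/

section SurjectiveRingHom

variable {R S : Type*} [CommRing R] [CommRing S] {f : R →+* S}

theorem Ideal.quotientMap_span_pow_bijective (hf : Function.Surjective f) {a : R} {n : ℕ}
    (hker : RingHom.ker f ≤ Ideal.span {a ^ n}) :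
    Function.Bijective
      (Ideal.quotientMap (Ideal.span {f a ^ n}) f (span_pow_le_comap f a n)) := by
  refine ⟨Ideal.quotientMap_injective' ?_, Ideal.quotientMap_surjective hf⟩
  rw [← map_pow, ← Set.image_singleton, ← Ideal.map_span, Ideal.comap_map_of_surjective' f hf]
  exact sup_le le_rfl hker

theorem Localization.awayMap_bijective_of_surjective (hf : Function.Surjective f) {a : R}
    (hker : ∀ r ∈ RingHom.ker f, a * r = 0) :
    Function.Bijective (Localization.awayMap f a) := by
  refine ⟨awayMap_injective_iff.mpr fun r hr => ⟨1, by rw [pow_one]; exact hker r hr⟩,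
    awayMap_surjective_iff.mpr fun s => ?_⟩
  obtain ⟨r, rfl⟩ := hf s
  exact ⟨r, 0, by rw [pow_zero, one_mul]⟩

end SurjectiveRingHom

section ShiftModule

variable (k : Type*) [Field k]

abbrev ShiftModule := Module.AEval' (LinearMap.funLeft k k Nat.succ)

instance : Module (Polynomial k)ᵐᵒᵖ (ShiftModule k) :=
  Module.compHom _ ((RingHom.id (Polynomial k)).fromOpposite fun _ _ => Commute.all _ _)

instance : IsCentralScalar (Polynomial k) (ShiftModule k) := ⟨fun _ _ => rfl⟩

def ShiftModule.single (n : ℕ) : ShiftModule k :=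
  Module.AEval'.of _ (Pi.single n 1)

variable {k}

theorem ShiftModule.X_smul_single_succ (n : ℕ) :
    (Polynomial.X : Polynomial k) • ShiftModule.single k (n + 1) = ShiftModule.single k n := by
  rw [ShiftModule.single, Module.AEval'.X_smul_of]
  congr 1
  funext m
  simp [Pi.single_apply]

theorem ShiftModule.X_smul_single_zero :
    (Polynomial.X : Polynomial k) • ShiftModule.single k 0 = 0 := by
  rw [ShiftModule.single, Module.AEval'.X_smul_of, LinearEquiv.map_eq_zero_iff]
  funext m
  simp

theorem ShiftModule.single_ne_zero (n : ℕ) : ShiftModule.single k n ≠ 0 := by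
  rw [ShiftModule.single, Ne, LinearEquiv.map_eq_zero_iff]
  exact Pi.single_eq_zero_iff.not.mpr one_ne_zero

variable (k)

def exTestHom : ExPolyRing k →+* TrivSqZeroExt (Polynomial k) (ShiftModule k) :=
  eval₂Hom (TrivSqZeroExt.inlHom _ _ |>.comp Polynomial.C)
    fun i => i.elim (.inl Polynomial.X) fun n => .inr (ShiftModule.single k n)

variable {k}

theorem exTestHom_exX : exTestHom k (exX k) = .inl Polynomial.X := by
  simp [exTestHom, exX]

theorem exTestHom_exZ (n : ℕ) : exTestHom k (exZ k n) = .inr (ShiftModule.single k n) := by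
  simp [exTestHom, exZ]

theorem exRel_le_ker_exTestHom : exRel k ≤ RingHom.ker (exTestHom k) := by
  rw [exRel, Ideal.span_le]
  rintro p ((rfl | ⟨n, rfl⟩) | ⟨⟨i, j⟩, rfl⟩) <;>
    simp only [SetLike.mem_coe, RingHom.mem_ker, map_mul, map_sub, exTestHom_exX, exTestHom_exZ,
      TrivSqZeroExt.inl_mul_inr, TrivSqZeroExt.inr_mul_inr]
  · rw [ShiftModule.X_smul_single_zero, TrivSqZeroExt.inr_zero]
  · rw [ShiftModule.X_smul_single_succ, sub_self]

end ShiftModule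

section ExA

variable {k : Type*} [Field k]

theorem exZA_ne_zero : exZA k ≠ 0 := by
  rw [exZA, Ne, Ideal.Quotient.eq_zero_iff_mem]
  intro h
  have := congrArg TrivSqZeroExt.snd (exRel_le_ker_exTestHom h)
  rw [exTestHom_exZ, TrivSqZeroExt.snd_inr, TrivSqZeroExt.snd_zero] at this
  exact ShiftModule.single_ne_zero 0 this

theorem exXA_mul_exZA : exXA k * exZA k = 0 := by
  rw [exXA, exZA, ← map_mul, Ideal.Quotient.eq_zero_iff_mem]
  exact Ideal.subset_span (Or.inl (Or.inl rfl))

theorem exZA_eq_exXA_pow_mul (n : ℕ) :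
    exZA k = exXA k ^ n * Ideal.Quotient.mk (exRel k) (exZ k n) := by
  induction n with
  | zero => rw [pow_zero, one_mul, exZA]
  | succ n ih =>
    have hz : Ideal.Quotient.mk (exRel k) (exZ k n) =
        exXA k * Ideal.Quotient.mk (exRel k) (exZ k (n + 1)) := by
      rw [exXA, ← map_mul, Ideal.Quotient.eq]
      exact Ideal.subset_span (Or.inl (Or.inr ⟨n, rfl⟩))
    rw [ih, hz, pow_succ, mul_assoc]

theorem ker_exToB_le_span_exXA_pow (n : ℕ) : RingHom.ker (exToB k) ≤ Ideal.span {exXA k ^ n} := by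
  rw [exToB, Ideal.mk_ker, Ideal.span_singleton_le_span_singleton, exZA_eq_exXA_pow_mul n]
  exact dvd_mul_right _ _

theorem exXA_mul_eq_zero_of_mem_ker_exToB {a : ExA k} (ha : a ∈ RingHom.ker (exToB k)) :
    exXA k * a = 0 := by
  rw [exToB, Ideal.mk_ker, Ideal.mem_span_singleton'] at ha
  obtain ⟨c, rfl⟩ := ha
  rw [mul_left_comm, exXA_mul_exZA, mul_zero]

theorem exToB_surjective : Function.Surjective (exToB k) :=
  Ideal.Quotient.mk_surjective

theorem exToB_not_injective : ¬ Function.Injective (exToB k) := fun hinj =>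
  exZA_ne_zero <| hinj <| by
    rw [map_zero, exToB, Ideal.Quotient.eq_zero_iff_mem]
    exact Ideal.subset_span rfl

end ExA

/-- The example at the end of Appendix A: with `A = k[x,z₁,z₂,…]/(xz₁, {z_k − x z_{k+1}},
{z_i z_j})` and `B = A/(z₁)`, the surjection `A → B` becomes an isomorphism modulo `xⁿ`
for every `n ≥ 1` and after inverting `x`, yet it is not an isomorphism. -/
theorem exA_to_exB_iso_mod_powers_and_localized_but_not_iso (k : Type*) [Field k] :
    (∀ n : ℕ, 1 ≤ n → Function.Bijective
      (@Ideal.quotientMap _ CommRing.toRing _ CommRing.toRing (Ideal.span {exXA k ^ n}) (Ideal.span {exToB k (exXA k) ^ n})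
        (Ideal.instIsTwoSided_1 _) (Ideal.instIsTwoSided_1 _) (exToB k)
        (by rw [Ideal.span_le, Set.singleton_subset_iff]
            simp only [SetLike.mem_coe, Ideal.mem_comap, map_pow]
            exact Ideal.subset_span rfl))) ∧
    Function.Bijective (Localization.awayMap (P := ExA k ⧸ Ideal.span {exZA k}) (exToB k) (exXA k)) ∧
    Function.Surjective (exToB k) ∧
    ¬ Function.Bijective (exToB k) := by
  refine ⟨fun n _ => ?_, ?_, exToB_surjective, fun hbij => exToB_not_injective hbij.1⟩
  · exact Ideal.quotientMap_span_pow_bijective (S := ExA k ⧸ Ideal.span {exZA k}) exToB_surjective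
      (ker_exToB_le_span_exXA_pow n)
  · exact Localization.awayMap_bijective_of_surjective (S := ExA k ⧸ Ideal.span {exZA k})
      exToB_surjective fun _ => exXA_mul_eq_zero_of_mem_ker_exToB

end
end
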